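/- arXiv:2409.07919 — 6 statements merged into one kernel-verified Lean document; each statement's English description precedes it below -/
import Mathlib

section
/- Let (B, A, i, e, l) be a cleft extension of abelian categories. An object X of B is projective if and only if l(X) is a projective object of A. -/
open CategoryTheory CategoryTheory.Limits

universe v₁ v₂ u₁ u₂

/-- A cleft extension of an abelian category `B` is an abelian category `A` together with
functors `i : B ⥤ A`, `e : A ⥤ B`, `l : B ⥤ A` such that `e` is faithful and exact,
`(l, e)` is an adjoint pair and `e ⋙ i ≅ 𝟭 B` (i.e. `i ⋙ e ≅ 𝟭 B`). -/
structure CleftExtension (B : Type u₁) (A : Type u₂) [Category.{v₁} B] [Category.{v₂} A]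
    [Abelian B] [Abelian A] where
  i : B ⥤ A
  e : A ⥤ B
  l : B ⥤ A
  e_faithful : e.Faithful
  e_preservesFiniteLimits : PreservesFiniteLimits e
  e_preservesFiniteColimits : PreservesFiniteColimits e
  adj : l ⊣ e
  iso : i ⋙ e ≅ 𝟭 B

/-- Let `(B, A, i, e, l)` be a cleft extension of abelian categories.
An object `X` of `B` is projective if and only if `l(X)` is a projective object of `A`. -/
theorem cleftExtension_projective_iff_l_obj_projective
    (B : Type u₁) (A : Type u₂) [Category.{v₁} B] [Category.{v₂} A]
    [Abelian B] [Abelian A] [EnoughProjectives B] [EnoughProjectives A]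
    (C : CleftExtension B A) (X : B) :
    Projective X ↔ Projective (C.l.obj X) := by
  haveI := C.e_faithful
  haveI := C.e_preservesFiniteColimits
  haveI : C.e.PreservesEpimorphisms := inferInstance
  constructor
  · intro hX
    constructor
    intro Y Z h f hf; haveI := hf
    haveI : Epi (C.e.map f) := C.e.map_epi f
    obtain ⟨k, hk⟩ := hX.factors ((C.adj.homEquiv X Z) h) (C.e.map f)
    refine ⟨(C.adj.homEquiv X Y).symm k, ?_⟩
    have := C.adj.homEquiv_naturality_right_symm k f
    rw [hk] at this
    rw [← this, Equiv.symm_apply_apply]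
  · intro hL
    constructor
    intro Y Z h f hf; haveI := hf
    -- `C.i.map f` is an epi since `e` maps it to something isomorphic to `f`
    have heq : C.e.map (C.i.map f) = C.iso.hom.app Y ≫ f ≫ C.iso.inv.app Z := by
      have := C.iso.hom.naturality f
      simp only [Functor.comp_map, Functor.id_map] at this
      rw [← cancel_mono (C.iso.hom.app Z)]
      simp [this]
    haveI : Epi (C.e.map (C.i.map f)) := by
      rw [heq]
      exact epi_comp _ _
    haveI : Epi (C.i.map f) := C.e.epi_of_epi_map ‹_›
    -- lift against `C.i.map f` using projectivity of `l X`
    obtain ⟨k, hk⟩ := hL.factors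
      ((C.adj.homEquiv X (C.i.obj Z)).symm (h ≫ C.iso.inv.app Z)) (C.i.map f)
    refine ⟨(C.adj.homEquiv X (C.i.obj Y)) k ≫ C.iso.hom.app Y, ?_⟩
    have hnat : C.iso.hom.app Y ≫ f = C.e.map (C.i.map f) ≫ C.iso.hom.app Z := by
      have := C.iso.hom.naturality f
      simpa using this.symm
    rw [Category.assoc, hnat, ← Category.assoc, ← C.adj.homEquiv_naturality_right, hk,
      Equiv.apply_symm_apply, Category.assoc, Iso.inv_hom_id_app]
    simp
end

section
/- Let (B, A, i, e, l) be a cleft extension of abelian categories. An object of A is projective if and only if it is a direct summand of l(P) for some projective object P of B. -/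
open CategoryTheory CategoryTheory.Limits

universe v₁ v₂ u₁ u₂

/-- Let `(B, A, i, e, l)` be a cleft extension of abelian categories.
An object of `A` is projective if and only if it is a direct summand of `l(P)`
for some projective object `P` of `B`. -/
theorem cleftExtension_projective_iff_direct_summand_of_l_obj
    (B : Type u₁) (A : Type u₂) [Category.{v₁} B] [Category.{v₂} A]
    [Abelian B] [Abelian A] [EnoughProjectives B] [EnoughProjectives A]
    (C : CleftExtension B A) (X : A) :
    Projective X ↔
      ∃ (P : B) (_ : Projective P) (s : X ⟶ C.l.obj P) (r : C.l.obj P ⟶ X),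
        s ≫ r = 𝟙 X := by
  haveI := C.e_faithful
  haveI := C.e_preservesFiniteColimits
  haveI : C.e.PreservesEpimorphisms := inferInstance
  constructor
  · intro hX
    refine ⟨Projective.over (C.e.obj X), inferInstance, ?_⟩
    set p : Projective.over (C.e.obj X) ⟶ C.e.obj X := Projective.π _
    set φ : C.l.obj (Projective.over (C.e.obj X)) ⟶ X :=
      (C.adj.homEquiv _ _).symm p with hφ
    have hep : C.adj.unit.app _ ≫ C.e.map φ = p := by
      simp [hφ, Adjunction.homEquiv_counit]
    have : Epi (C.adj.unit.app (Projective.over (C.e.obj X)) ≫ C.e.map φ) := by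
      rw [hep]; infer_instance
    have : Epi (C.e.map φ) := epi_of_epi (C.adj.unit.app _) _
    have hφepi : Epi φ := C.e.epi_of_epi_map this
    exact ⟨Projective.factorThru (𝟙 X) φ, φ, Projective.factorThru_comp _ _⟩
  · rintro ⟨P, hP, s, r, hsr⟩
    haveI : Projective (C.l.obj P) := C.adj.map_projective P hP
    constructor
    intro E Z f g hg
    exact ⟨s ≫ Projective.factorThru (r ≫ f) g, by
      rw [Category.assoc, Projective.factorThru_comp, ← Category.assoc, hsr,
        Category.id_comp]⟩
end

section
/- Let (B, A, i, e, l) be a cleft extension of abelian categories and let F : B → B be the associated right exact endofunctor (defined by F = e ∘ G ∘ i where G(X) = ker(μ_X : le(X) → X)). Then for every object X of B and every i ≥ 1, the i-th left derived functor satisfies L_i F(X) ≅ e(L_i l(X)). -/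
open CategoryTheory CategoryTheory.Limits

universe v₁ v₂ u₁ u₂

namespace CleftAux

variable {B : Type u₁} {A : Type u₂} [Category.{v₁} B] [Category.{v₂} A]
  [Abelian B] [Abelian A]

/-- `e` applied to the kernel fork is still a limit kernel fork. -/
noncomputable def eKer (e : A ⥤ B) (l : B ⥤ A) [PreservesFiniteLimits e]
    (adj : l ⊣ e) (G : A ⥤ A) (κ : G ⟶ e ⋙ l)
    (w : ∀ X : A, κ.app X ≫ adj.counit.app X = 0)
    (hG : ∀ X : A, IsLimit (KernelFork.ofι (κ.app X) (w X))) (Y : A) :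
    IsLimit (KernelFork.ofι (e.map (κ.app Y))
      (show e.map (κ.app Y) ≫ e.map (adj.counit.app Y) = 0 by
        rw [← e.map_comp, w, e.map_zero])) :=
  isLimitForkMapOfIsLimit' e (w Y) (hG Y)

lemma monoEκ (e : A ⥤ B) (l : B ⥤ A) [PreservesFiniteLimits e]
    (adj : l ⊣ e) (G : A ⥤ A) (κ : G ⟶ e ⋙ l)
    (w : ∀ X : A, κ.app X ≫ adj.counit.app X = 0)
    (hG : ∀ X : A, IsLimit (KernelFork.ofι (κ.app X) (w X))) (Y : A) :
    Mono (e.map (κ.app Y)) :=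
  mono_of_isLimit_fork (eKer e l adj G κ w hG Y)

/-- The natural transformation `β : i ⋙ G ⋙ e ⟶ l ⋙ e`. -/
@[simps]
def β (i : B ⥤ A) (e : A ⥤ B) (l : B ⥤ A) (iso : i ⋙ e ≅ 𝟭 B)
    (G : A ⥤ A) (κ : G ⟶ e ⋙ l) : i ⋙ G ⋙ e ⟶ l ⋙ e where
  app Y := e.map (κ.app (i.obj Y)) ≫ e.map (l.map (iso.hom.app Y))
  naturality Y Z f := by
    dsimp
    rw [← e.map_comp, ← e.map_comp, ← e.map_comp, ← e.map_comp]
    congr 1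
    rw [← Category.assoc, κ.naturality (i.map f)]
    dsimp
    have h : e.map (i.map f) ≫ iso.hom.app Z = iso.hom.app Y ≫ f := by
      have := iso.hom.naturality f; dsimp at this; exact this
    rw [Category.assoc, ← l.map_comp, h, l.map_comp]
    simp only [Category.assoc]

/-- The natural transformation `ρ : l ⋙ e ⟶ 𝟭 B`. -/
@[simps]
def ρ (i : B ⥤ A) (e : A ⥤ B) (l : B ⥤ A) (adj : l ⊣ e) (iso : i ⋙ e ≅ 𝟭 B) :
    l ⋙ e ⟶ 𝟭 B where
  app Y := e.map (l.map (iso.inv.app Y)) ≫ e.map (adj.counit.app (i.obj Y)) ≫ iso.hom.app Y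
  naturality Y Z f := by
    dsimp
    have h1 : f ≫ iso.inv.app Z = iso.inv.app Y ≫ e.map (i.map f) := by
      have := iso.inv.naturality f; dsimp at this; exact this
    have h2 : e.map (i.map f) ≫ iso.hom.app Z = iso.hom.app Y ≫ f := by
      have := iso.hom.naturality f; dsimp at this; exact this
    have h3 : l.map (e.map (i.map f)) ≫ adj.counit.app (i.obj Z) =
        adj.counit.app (i.obj Y) ≫ i.map f := by
      have := adj.counit.naturality (i.map f); dsimp at this; exact this
    rw [← Category.assoc, ← e.map_comp, ← l.map_comp, h1, l.map_comp, e.map_comp,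
      Category.assoc, ← Category.assoc (e.map (l.map (e.map (i.map f)))), ← e.map_comp,
      h3, e.map_comp, Category.assoc, h2]
    simp only [Category.assoc]

/-- First piece of the idempotent-complement map. -/
def u1 (i : B ⥤ A) (e : A ⥤ B) (l : B ⥤ A) (iso : i ⋙ e ≅ 𝟭 B) (Y : B) :
    e.obj (l.obj Y) ⟶ e.obj (l.obj (e.obj (i.obj Y))) :=
  e.map (l.map (iso.inv.app Y))

/-- Second piece of the idempotent-complement map. -/
def u2 (i : B ⥤ A) (e : A ⥤ B) (l : B ⥤ A) (adj : l ⊣ e) (iso : i ⋙ e ≅ 𝟭 B) (Y : B) :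
    e.obj (l.obj Y) ⟶ e.obj (l.obj (e.obj (i.obj Y))) :=
  (ρ i e l adj iso).app Y ≫ iso.inv.app Y ≫ adj.unit.app (e.obj (i.obj Y))

/-- The idempotent-complement map `u`. -/
def u (i : B ⥤ A) (e : A ⥤ B) (l : B ⥤ A) (adj : l ⊣ e) (iso : i ⋙ e ≅ 𝟭 B) (Y : B) :
    e.obj (l.obj Y) ⟶ e.obj (l.obj (e.obj (i.obj Y))) :=
  u1 i e l iso Y - u2 i e l adj iso Y

lemma u_w (i : B ⥤ A) (e : A ⥤ B) (l : B ⥤ A) (adj : l ⊣ e) (iso : i ⋙ e ≅ 𝟭 B) (Y : B) :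
    u i e l adj iso Y ≫ e.map (adj.counit.app (i.obj Y)) = 0 := by
  have hu : u i e l adj iso Y = u1 i e l iso Y - u2 i e l adj iso Y := rfl
  rw [hu, Preadditive.sub_comp, u1, u2, ρ_app]
  simp only [Category.assoc, Adjunction.right_triangle_components]
  simp

/-- The splitting `q : l ⋙ e ⟶ i ⋙ G ⋙ e`. -/
noncomputable def q (i : B ⥤ A) (e : A ⥤ B) (l : B ⥤ A) [PreservesFiniteLimits e]
    (adj : l ⊣ e) (iso : i ⋙ e ≅ 𝟭 B) (G : A ⥤ A) (κ : G ⟶ e ⋙ l)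
    (w : ∀ X : A, κ.app X ≫ adj.counit.app X = 0)
    (hG : ∀ X : A, IsLimit (KernelFork.ofι (κ.app X) (w X))) :
    l ⋙ e ⟶ i ⋙ G ⋙ e where
  app Y := (eKer e l adj G κ w hG (i.obj Y)).lift
    (KernelFork.ofι _ (u_w i e l adj iso Y))
  naturality Y Z f := by
    have := monoEκ e l adj G κ w hG (i.obj Z)
    rw [← cancel_mono (e.map (κ.app (i.obj Z)))]
    have hfacY : (eKer e l adj G κ w hG (i.obj Y)).lift
        (KernelFork.ofι _ (u_w i e l adj iso Y)) ≫ e.map (κ.app (i.obj Y)) =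
        u i e l adj iso Y := Fork.IsLimit.lift_ι _
    have hfacZ : (eKer e l adj G κ w hG (i.obj Z)).lift
        (KernelFork.ofι _ (u_w i e l adj iso Z)) ≫ e.map (κ.app (i.obj Z)) =
        u i e l adj iso Z := Fork.IsLimit.lift_ι _
    have hκ : G.map (i.map f) ≫ κ.app (i.obj Z) =
        κ.app (i.obj Y) ≫ l.map (e.map (i.map f)) := by
      have := κ.naturality (i.map f); dsimp at this; exact this
    have hmap : e.map (G.map (i.map f)) ≫ e.map (κ.app (i.obj Z)) =
        e.map (κ.app (i.obj Y)) ≫ e.map (l.map (e.map (i.map f))) := by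
      rw [← e.map_comp, hκ, e.map_comp]
    have hfacY₂ := reassoc_of% hfacY
    dsimp
    simp only [Category.assoc]
    rw [hfacZ, hmap, hfacY₂]
    -- now prove the "naturality of u"
    have huY : u i e l adj iso Y = u1 i e l iso Y - u2 i e l adj iso Y := rfl
    have huZ : u i e l adj iso Z = u1 i e l iso Z - u2 i e l adj iso Z := rfl
    have h1 : f ≫ iso.inv.app Z = iso.inv.app Y ≫ e.map (i.map f) := by
      have := iso.inv.naturality f; dsimp at this; exact this
    have hη : adj.unit.app (e.obj (i.obj Y)) ≫ e.map (l.map (e.map (i.map f))) =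
        e.map (i.map f) ≫ adj.unit.app (e.obj (i.obj Z)) := by
      have := adj.unit.naturality (e.map (i.map f)); dsimp at this; exact this.symm
    have hρ : e.map (l.map f) ≫ (ρ i e l adj iso).app Z =
        (ρ i e l adj iso).app Y ≫ f := by
      have := (ρ i e l adj iso).naturality f; dsimp at this; exact this
    have e1 : u1 i e l iso Y ≫ e.map (l.map (e.map (i.map f))) =
        e.map (l.map f) ≫ u1 i e l iso Z := by
      rw [u1, u1, ← e.map_comp, ← l.map_comp, ← e.map_comp, ← l.map_comp, h1]
    have e2 : u2 i e l adj iso Y ≫ e.map (l.map (e.map (i.map f))) =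
        e.map (l.map f) ≫ u2 i e l adj iso Z := by
      rw [u2, u2, Category.assoc, Category.assoc, hη, ← Category.assoc _ (e.map (i.map f)),
        ← h1, ← Category.assoc, ← Category.assoc, ← Category.assoc, ← hρ]
      simp only [Category.assoc]
    simp only [huY, huZ, Preadditive.comp_sub, Preadditive.sub_comp, e1, e2]

lemma q_fac (i : B ⥤ A) (e : A ⥤ B) (l : B ⥤ A) [PreservesFiniteLimits e]
    (adj : l ⊣ e) (iso : i ⋙ e ≅ 𝟭 B) (G : A ⥤ A) (κ : G ⟶ e ⋙ l)
    (w : ∀ X : A, κ.app X ≫ adj.counit.app X = 0)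
    (hG : ∀ X : A, IsLimit (KernelFork.ofι (κ.app X) (w X))) (Y : B) :
    (q i e l adj iso G κ w hG).app Y ≫ e.map (κ.app (i.obj Y)) = u i e l adj iso Y := by
  dsimp only [q]
  exact Fork.IsLimit.lift_ι _

lemma β_comp_q (i : B ⥤ A) (e : A ⥤ B) (l : B ⥤ A) [PreservesFiniteLimits e]
    (adj : l ⊣ e) (iso : i ⋙ e ≅ 𝟭 B) (G : A ⥤ A) (κ : G ⟶ e ⋙ l)
    (w : ∀ X : A, κ.app X ≫ adj.counit.app X = 0)
    (hG : ∀ X : A, IsLimit (KernelFork.ofι (κ.app X) (w X))) :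
    β i e l iso G κ ≫ q i e l adj iso G κ w hG = 𝟙 (i ⋙ G ⋙ e) := by
  ext Y
  have := monoEκ e l adj G κ w hG (i.obj Y)
  rw [← cancel_mono (e.map (κ.app (i.obj Y)))]
  dsimp
  have hu : u i e l adj iso Y = u1 i e l iso Y - u2 i e l adj iso Y := rfl
  have h1' : e.map (l.map (iso.hom.app Y)) ≫ u1 i e l iso Y =
      𝟙 (e.obj (l.obj (e.obj (i.obj Y)))) := by
    rw [u1, ← e.map_comp, ← l.map_comp, Iso.hom_inv_id_app]
    simp
  have h2' : e.map (l.map (iso.hom.app Y)) ≫ u2 i e l adj iso Y =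
      e.map (adj.counit.app (i.obj Y)) ≫ adj.unit.app (e.obj (i.obj Y)) := by
    rw [u2, ρ_app]
    simp only [Category.assoc]
    rw [← Category.assoc (e.map (l.map (iso.hom.app Y))), ← e.map_comp, ← l.map_comp,
      Iso.hom_inv_id_app]
    simp only [CategoryTheory.Functor.map_id, Category.id_comp, Iso.hom_inv_id_app_assoc]
  rw [Category.assoc, q_fac, hu, Preadditive.comp_sub, β_app, Category.assoc, h1', Category.assoc,
    h2']
  erw [Category.comp_id]
  rw [← Category.assoc, ← e.map_comp, w, e.map_zero, zero_comp,
    sub_zero, Category.id_comp]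

lemma q_comp_β (i : B ⥤ A) (e : A ⥤ B) (l : B ⥤ A) [PreservesFiniteLimits e]
    (adj : l ⊣ e) (iso : i ⋙ e ≅ 𝟭 B) (G : A ⥤ A) (κ : G ⟶ e ⋙ l)
    (w : ∀ X : A, κ.app X ≫ adj.counit.app X = 0)
    (hG : ∀ X : A, IsLimit (KernelFork.ofι (κ.app X) (w X))) :
    q i e l adj iso G κ w hG ≫ β i e l iso G κ =
      𝟙 (l ⋙ e) - ρ i e l adj iso ≫ adj.unit := by
  ext Y
  have hu : u i e l adj iso Y = u1 i e l iso Y - u2 i e l adj iso Y := rfl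
  have h1'' : u1 i e l iso Y ≫ e.map (l.map (iso.hom.app Y)) = 𝟙 _ := by
    rw [u1, ← e.map_comp, ← l.map_comp, Iso.inv_hom_id_app]
    simp
  have hη : adj.unit.app (e.obj (i.obj Y)) ≫ e.map (l.map (iso.hom.app Y)) =
      iso.hom.app Y ≫ adj.unit.app Y := by
    have := adj.unit.naturality (iso.hom.app Y); dsimp at this; exact this.symm
  have h2'' : u2 i e l adj iso Y ≫ e.map (l.map (iso.hom.app Y)) =
      (ρ i e l adj iso).app Y ≫ adj.unit.app Y := by
    rw [u2]
    simp only [Category.assoc]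
    rw [hη, Iso.inv_hom_id_app_assoc]
  simp only [NatTrans.comp_app, NatTrans.app_sub, NatTrans.id_app, β_app]
  rw [← Category.assoc, q_fac, hu, Preadditive.sub_comp, h1'', h2'']
  rfl

end CleftAux

/-- Let `(B, A, i, e, l)` be a cleft extension of abelian categories and
let `F : B ⥤ B` be the associated right exact endofunctor, `F = e ∘ G ∘ i`, where
`G(X) = ker(μ_X : le(X) ⟶ X)` is the kernel of the counit of the adjunction `l ⊣ e`.
Then for every object `X` of `B` and every `n ≥ 1` there is an isomorphism
`Lₙ F (X) ≅ e (Lₙ l (X))`. -/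
theorem cleftExtension_leftDerived_F_iso_e_leftDerived_l
    (B : Type u₁) (A : Type u₂) [Category.{v₁} B] [Category.{v₂} A]
    [Abelian B] [Abelian A] [EnoughProjectives B] [EnoughProjectives A]
    -- the cleft extension data
    (i : B ⥤ A) (e : A ⥤ B) (l : B ⥤ A)
    [e.Faithful] [PreservesFiniteLimits e] [PreservesFiniteColimits e]
    [i.Additive] [e.Additive] [l.Additive]
    (adj : l ⊣ e) (iso : i ⋙ e ≅ 𝟭 B)
    -- the endofunctor `G` of `A`, given with the data exhibiting `G(X)` as the kernel of
    -- the counit `μ_X : l(e(X)) ⟶ X`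
    (G : A ⥤ A) [G.Additive] (κ : G ⟶ e ⋙ l)
    (w : ∀ X : A, κ.app X ≫ adj.counit.app X = 0)
    (hG : ∀ X : A, Nonempty (IsLimit (KernelFork.ofι (κ.app X) (w X)))) :
    -- conclusion: `Lₙ F (X) ≅ e (Lₙ l (X))` for all `n ≥ 1`, where `F = e ∘ G ∘ i`
    ∀ (n : ℕ), 1 ≤ n → ∀ X : B,
      Nonempty ((((i ⋙ G ⋙ e).leftDerived n).obj X) ≅ e.obj ((l.leftDerived n).obj X)) := by
  intro n hn X
  obtain ⟨m, rfl⟩ : ∃ m, n = m + 1 := ⟨n - 1, (Nat.succ_pred_eq_of_pos hn).symm⟩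
  set n := m + 1
  have P : ProjectiveResolution X := (HasProjectiveResolution.out (Z := X)).some
  set c : ComplexShape ℕ := ComplexShape.down ℕ
  set K := P.complex with hK
  have hG' : ∀ Y : A, IsLimit (KernelFork.ofι (κ.app Y) (w Y)) := fun Y => (hG Y).some
  set HF := HomologicalComplex.homologyFunctor B c n with hHF
  -- chain maps
  set cβ := (NatTrans.mapHomologicalComplex (CleftAux.β i e l iso G κ) c).app K with hcβ
  set cq := (NatTrans.mapHomologicalComplex (CleftAux.q i e l adj iso G κ w hG') c).app K
    with hcq
  set cρ := (NatTrans.mapHomologicalComplex (CleftAux.ρ i e l adj iso) c).app K with hcρ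
  set cσ := (NatTrans.mapHomologicalComplex adj.unit c).app K with hcσ
  -- homology of K vanishes in degree n
  have hKzero : IsZero (K.homology n) := by
    rw [← HomologicalComplex.exactAt_iff_isZero_homology]
    exact P.complex_exactAt_succ m
  have hIdZero : IsZero (HF.obj (((𝟭 B).mapHomologicalComplex c).obj K)) := by
    refine hKzero.of_iso ?_
    exact (HF.mapIso (((Functor.mapHomologicalComplexIdIso B c).app K).symm)).symm
  -- the splitting isomorphism on homology
  have splitting : HF.obj (((i ⋙ G ⋙ e).mapHomologicalComplex c).obj K) ≅
      HF.obj (((l ⋙ e).mapHomologicalComplex c).obj K) := by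
    refine ⟨HF.map cβ, HF.map cq, ?_, ?_⟩
    · rw [← HF.map_comp, hcβ, hcq, ← NatTrans.comp_app, ← NatTrans.mapHomologicalComplex_comp,
        CleftAux.β_comp_q, NatTrans.mapHomologicalComplex_id, NatTrans.id_app, HF.map_id]
    · rw [← HF.map_comp, hcβ, hcq, ← NatTrans.comp_app, ← NatTrans.mapHomologicalComplex_comp,
        CleftAux.q_comp_β]
      have hsub : (NatTrans.mapHomologicalComplex
          (𝟙 (l ⋙ e) - CleftAux.ρ i e l adj iso ≫ adj.unit) c).app K =
          𝟙 _ - cρ ≫ cσ := by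
        ext j
        simp [NatTrans.mapHomologicalComplex, hcρ, hcσ]
        congr 1
        exact ((Category.assoc _ _ _).trans (congrArg _ (Category.assoc _ _ _))).symm
      rw [hsub, HF.map_sub, HF.map_id, HF.map_comp]
      have : HF.map cρ = 0 := hIdZero.eq_of_tgt _ _
      rw [this, zero_comp, sub_zero]
  -- `e` commutes with homology
  have eHomology : HF.obj (((l ⋙ e).mapHomologicalComplex c).obj K) ≅
      e.obj (((l.mapHomologicalComplex c).obj K).homology n) :=
    (((l.mapHomologicalComplex c).obj K).sc n).mapHomologyIso e
  exact ⟨(P.isoLeftDerivedObj (i ⋙ G ⋙ e) n) ≪≫ splitting ≪≫ eHomology ≪≫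
    (e.mapIso (P.isoLeftDerivedObj l n)).symm⟩
end

section
/- Let (B, A, i, e, r) be a cleft coextension of abelian categories. An object X of B is injective if and only if r(X) is an injective object of A. -/
open CategoryTheory CategoryTheory.Limits

universe v₁ v₂ u₁ u₂

/-- A cleft coextension of an abelian category `B` is an abelian category `A` together with
functors `i : B ⥤ A`, `e : A ⥤ B`, `r : B ⥤ A` such that `e` is faithful and exact,
`(e, r)` is an adjoint pair and `i ⋙ e ≅ 𝟭 B`. -/
structure CleftCoextension (B : Type u₁) (A : Type u₂) [Category.{v₁} B] [Category.{v₂} A]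
    [Abelian B] [Abelian A] where
  i : B ⥤ A
  e : A ⥤ B
  r : B ⥤ A
  e_faithful : e.Faithful
  e_preservesFiniteLimits : PreservesFiniteLimits e
  e_preservesFiniteColimits : PreservesFiniteColimits e
  adj : e ⊣ r
  iso : i ⋙ e ≅ 𝟭 B

/-- Let `(B, A, i, e, r)` be a cleft coextension of abelian categories.
An object `X` of `B` is injective if and only if `r(X)` is an injective object of `A`. -/
theorem cleftCoextension_injective_iff_r_obj_injective
    (B : Type u₁) (A : Type u₂) [Category.{v₁} B] [Category.{v₂} A]
    [Abelian B] [Abelian A] [EnoughInjectives B] [EnoughInjectives A]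
    (C : CleftCoextension B A) (X : B) :
    Injective X ↔ Injective (C.r.obj X) := by
  letI := C.e_preservesFiniteLimits
  letI := C.e_faithful
  constructor
  · intro hX
    exact Injective.injective_of_adjoint C.adj X
  · intro hrX
    constructor
    intro Y Z g f hf
    -- `C.i.map f` is a mono since `e` is faithful and `e (i f) ≅ f` is mono
    haveI : Mono (C.e.map (C.i.map f)) := by
      have : C.e.map (C.i.map f) = C.iso.hom.app Y ≫ f ≫ C.iso.inv.app Z := by
        have h := C.iso.hom.naturality f
        simp only [Functor.comp_map, Functor.id_map] at h
        rw [← Category.assoc, ← h, Category.assoc, Iso.hom_inv_id_app, Category.comp_id]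
      rw [this]
      infer_instance
    haveI : Mono (C.i.map f) := C.e.mono_of_mono_map this
    -- transpose `g` along the adjunction
    set g' : C.i.obj Y ⟶ C.r.obj X :=
      C.adj.homEquiv (C.i.obj Y) X (C.iso.hom.app Y ≫ g) with hg'
    obtain ⟨h, hh⟩ := hrX.factors g' (C.i.map f)
    refine ⟨C.iso.inv.app Z ≫ (C.adj.homEquiv (C.i.obj Z) X).symm h, ?_⟩
    have hnat : C.iso.inv.app Y ≫ C.e.map (C.i.map f) = f ≫ C.iso.inv.app Z :=
      (C.iso.inv.naturality f).symm
    calc f ≫ C.iso.inv.app Z ≫ (C.adj.homEquiv (C.i.obj Z) X).symm h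
        = C.iso.inv.app Y ≫ C.e.map (C.i.map f) ≫
            (C.adj.homEquiv (C.i.obj Z) X).symm h := by
          rw [← Category.assoc, ← hnat, Category.assoc]
      _ = C.iso.inv.app Y ≫ (C.adj.homEquiv (C.i.obj Y) X).symm (C.i.map f ≫ h) := by
          rw [C.adj.homEquiv_naturality_left_symm]
      _ = C.iso.inv.app Y ≫ (C.adj.homEquiv (C.i.obj Y) X).symm g' := by rw [hh]
      _ = g := by
          rw [hg', Equiv.symm_apply_apply, ← Category.assoc, Iso.inv_hom_id_app,
            Category.id_comp]
end

section
/- Let G : T → T' and F : T' → T be triangle functors between triangulated categories with (F, G) an adjoint pair. If F is fully faithful, then G induces a triangle equivalence T / ker(G) ≃ T', where ker(G) is the full triangulated subcategory of objects sent to zero by G. -/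
open CategoryTheory CategoryTheory.Limits CategoryTheory.Pretriangulated

universe v₁ v₂ u₁ u₂

variable (T : Type u₁) (T' : Type u₂) [Category.{v₁} T] [Category.{v₂} T']
  [HasZeroObject T] [HasZeroObject T'] [Preadditive T] [Preadditive T']
  [HasShift T ℤ] [HasShift T' ℤ]
  [∀ n : ℤ, (shiftFunctor T n).Additive] [∀ n : ℤ, (shiftFunctor T' n).Additive]
  [Pretriangulated T] [Pretriangulated T']

/-- The kernel of a triangulated functor `G : T ⥤ T'`, as a triangulated subcategory of `T`:
it consists of the objects sent to zero by `G`. -/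
noncomputable def kernelSubcategory (G : T ⥤ T') [G.Additive] [G.CommShift ℤ]
    [G.IsTriangulated] : ObjectProperty T :=
  fun X => IsZero (G.obj X)

instance kernelSubcategory_isTriangulated (G : T ⥤ T') [G.Additive] [G.CommShift ℤ]
    [G.IsTriangulated] : (kernelSubcategory T T' G).IsTriangulated where
  exists_zero := ⟨(HasZeroObject.zero' T).zero, isZero_zero T, G.map_isZero (isZero_zero T)⟩
  isStableUnderShiftBy n := ⟨fun X hX =>
      IsZero.of_iso ((shiftFunctor T' n).map_isZero hX) ((G.commShiftIso n).app X)⟩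
  ext₂' Tr hTr h₁ h₃ := ObjectProperty.le_isoClosure _ _
      (Pretriangulated.Triangle.isZero₂_of_isZero₁₃ (G.mapTriangle.obj Tr)
        (G.map_distinguished Tr hTr) h₁ h₃)

open CategoryTheory.Localization in
/-- Dual of `Adjunction.isLocalization`: if `F ⊣ G` with `F` fully faithful, then `G` is a
localization functor with respect to the class of morphisms sent to isomorphisms by `G`. -/
lemma aux_isLocalization {C₁ : Type u₁} {C₂ : Type u₂} [Category.{v₁} C₁] [Category.{v₂} C₂]
    (G : C₁ ⥤ C₂) (F : C₂ ⥤ C₁) (adj : F ⊣ G) [F.Full] [F.Faithful] :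
    G.IsLocalization ((MorphismProperty.isomorphisms C₂).inverseImage G) := by
  let W := ((MorphismProperty.isomorphisms C₂).inverseImage G)
  have hG : W.IsInvertedBy G := fun _ _ _ hf => hf
  have hcounit : ∀ (X : C₁), W (adj.counit.app X) := by
    intro X
    change IsIso (G.map (adj.counit.app X))
    have : IsIso (adj.unit.app (G.obj X)) := inferInstance
    have h : IsIso (adj.unit.app (G.obj X) ≫ G.map (adj.counit.app X)) := by
      rw [adj.right_triangle_components X]
      exact inferInstanceAs (IsIso (𝟙 (G.obj X)))
    exact IsIso.of_isIso_comp_left (adj.unit.app (G.obj X)) (G.map (adj.counit.app X))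
  have : ∀ (X : C₁), IsIso ((Functor.whiskerRight adj.counit W.Q).app X) := fun X =>
    Localization.inverts W.Q W _ (hcounit X)
  have : IsIso (Functor.whiskerRight adj.counit W.Q) := NatIso.isIso_of_isIso_app _
  let e : W.Localization ≌ C₂ := CategoryTheory.Equivalence.mk
    (Localization.lift G hG W.Q) (F ⋙ W.Q)
    (liftNatIso W.Q W W.Q (G ⋙ F ⋙ W.Q) _ _
      (W.Q.leftUnitor.symm ≪≫ (asIso (Functor.whiskerRight adj.counit W.Q)).symm ≪≫
        Functor.associator G F W.Q))
    (Functor.associator _ _ _ ≪≫ Functor.isoWhiskerLeft _ (Localization.fac G hG W.Q) ≪≫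
      (asIso adj.unit).symm)
  apply Functor.IsLocalization.of_equivalence_target W.Q W G e
    (Localization.fac G hG W.Q)

/-- Let `G : T ⥤ T'` and `F : T' ⥤ T` be triangle functors between
triangulated categories with `(F, G)` an adjoint pair. If `F` is fully faithful, then `G`
induces a triangle equivalence `T / ker(G) ≃ T'` — formalized as: `G` is a localization
functor with respect to the class `W` of morphisms whose cone lies in the triangulated
subcategory `ker(G)` (so that the Verdier quotient `T / ker(G)` is identified with `T'`
via the functor induced by `G`). -/
theorem verdier_quotient_equivalence
    (G : T ⥤ T') (F : T' ⥤ T)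
    [F.Additive] [F.CommShift ℤ] [F.IsTriangulated]
    [G.Additive] [G.CommShift ℤ] [G.IsTriangulated]
    (adj : F ⊣ G) [F.Full] [F.Faithful] :
    G.IsLocalization (kernelSubcategory T T' G).trW := by
  have hW : (kernelSubcategory T T' G).trW =
      (MorphismProperty.isomorphisms T').inverseImage G := by
    ext X Y f
    constructor
    · rintro ⟨Z, g, h, hT, hZ⟩
      exact (Pretriangulated.Triangle.isZero₃_iff_isIso₁
        (G.mapTriangle.obj (Triangle.mk f g h)) (G.map_distinguished _ hT)).1 hZ
    · intro hf
      obtain ⟨Z, g, h, hT⟩ := Pretriangulated.distinguished_cocone_triangle f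
      exact ⟨Z, g, h, hT, Pretriangulated.Triangle.isZero₃_of_isIso₁
        (G.mapTriangle.obj (Triangle.mk f g h)) (G.map_distinguished _ hT) hf⟩
  rw [hW]
  exact aux_isLocalization G F adj
end

section
/- Let A and B be abelian categories with enough projectives and let (l, e) : B ⇄ A be an adjoint pair with e : A → B exact. Assume (i) L_i l = 0 for all sufficiently large i, and (ii) there is d such that pd_B(e(P)) ≤ d for all projective objects P of A. Then for every Gorenstein projective object X of B, l(X) is a Gorenstein projective object of A and L_i l(X) = 0 for all i ≥ 1. -/
open CategoryTheory CategoryTheory.Limits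

universe v₁ v₂ u₁ u₂

/-- An object `X` of an abelian category is Gorenstein projective if it is the image
`Im(P^{-1} → P^0)` of a totally acyclic complex `P` of projective objects, i.e. an acyclic
complex of projectives such that `Hom(P, Q)` is acyclic for every projective `Q`. -/
def IsGorensteinProjective {B : Type u₁} [Category.{v₁} B] [Abelian B] (X : B) : Prop :=
  ∃ P : CochainComplex B ℤ,
    -- `P` is a complex of projective objects
    (∀ n : ℤ, Projective (P.X n)) ∧
    -- `P` is acyclic
    (∀ n : ℤ, P.ExactAt n) ∧
    -- `Hom(P, Q)` is acyclic for every projective `Q`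
    (∀ (Q : B), Projective Q → ∀ (n : ℤ) (g : P.X n ⟶ Q), P.d (n - 1) n ≫ g = 0 →
      ∃ h : P.X (n + 1) ⟶ Q, g = P.d n (n + 1) ≫ h) ∧
    -- `X` is the image of `P^{-1} → P^0`
    Nonempty (X ≅ Limits.image (P.d (-1) 0))

namespace GorensteinAux

variable {𝒜 : Type u₁} [Category.{v₁} 𝒜] [Abelian 𝒜]

lemma d_comp_XIsoOfEq_hom {ι : Type*} {c : ComplexShape ι} (K : HomologicalComplex 𝒜 c)
    {a b b' : ι} (h : b = b') : K.d a b ≫ (K.XIsoOfEq h).hom = K.d a b' := by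
  subst h; simp [HomologicalComplex.XIsoOfEq]

lemma imageι_comp_factorThruImage_eq_zero {X Y Z : 𝒜} {f : X ⟶ Y} {g : Y ⟶ Z}
    (w : f ≫ g = 0) : image.ι f ≫ factorThruImage g = 0 := by
  rw [← cancel_mono (image.ι g), ← cancel_epi (factorThruImage f)]
  simp only [Category.assoc, image.fac, zero_comp, comp_zero]
  rw [image.fac_assoc, w]

lemma exact_mk_f_factor {S : ShortComplex 𝒜} (hS : S.Exact) :
    (ShortComplex.mk S.f (factorThruImage S.g)
      (by rw [← cancel_mono (image.ι S.g), Category.assoc, image.fac, zero_comp, S.zero])).Exact := by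
  let φ : (ShortComplex.mk S.f (factorThruImage S.g) (by
      rw [← cancel_mono (image.ι S.g), Category.assoc, image.fac, zero_comp, S.zero])) ⟶ S :=
    { τ₁ := 𝟙 _, τ₂ := 𝟙 _, τ₃ := image.ι S.g }
  exact (ShortComplex.exact_iff_of_epi_of_isIso_of_mono φ).2 hS

lemma exact_mk_imageι {S : ShortComplex 𝒜} (hS : S.Exact) :
    (ShortComplex.mk (image.ι S.f) S.g
      (by rw [← cancel_epi (factorThruImage S.f), image.fac_assoc, S.zero, comp_zero])).Exact := by
  let φ : S ⟶ (ShortComplex.mk (image.ι S.f) S.g (by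
      rw [← cancel_epi (factorThruImage S.f), image.fac_assoc, S.zero, comp_zero])) :=
    { τ₁ := factorThruImage S.f, τ₂ := 𝟙 _, τ₃ := 𝟙 _ }
  exact (ShortComplex.exact_iff_of_epi_of_isIso_of_mono φ).1 hS

/-- For an exact short complex, `cokernel f ≅ image g`. -/
noncomputable def cokernelIsoImage {S : ShortComplex 𝒜} (hS : S.Exact) :
    cokernel S.f ≅ image S.g :=
  IsColimit.coconePointUniqueUpToIso (cokernelIsCokernel S.f) (exact_mk_f_factor hS).gIsCokernel

/-- `Hom(P, M)` is "exact": every cocycle `P.X n ⟶ M` is a coboundary. -/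
def Lifts (P : CochainComplex 𝒜 ℤ) (M : 𝒜) : Prop :=
  ∀ (n : ℤ) (g : P.X n ⟶ M), P.d (n - 1) n ≫ g = 0 →
    ∃ h : P.X (n + 1) ⟶ M, g = P.d n (n + 1) ≫ h

variable (P : CochainComplex 𝒜 ℤ)

lemma lifts_step (hproj : ∀ n : ℤ, Projective (P.X n))
    {S : ShortComplex 𝒜} (hS : S.Exact) (hmono : Mono S.f) (hepi : Epi S.g)
    (hS1 : Lifts P S.X₁) (hS2 : Lifts P S.X₂) : Lifts P S.X₃ := by
  intro n g hg
  haveI := hproj n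
  obtain ⟨g₁, hg₁⟩ : ∃ g₁ : P.X n ⟶ S.X₂, g₁ ≫ S.g = g := ⟨Projective.factorThru g S.g, by simp⟩
  have hδ : (P.d (n-1) n ≫ g₁) ≫ S.g = 0 := by rw [Category.assoc, hg₁, hg]
  set u : P.X (n-1) ⟶ S.X₁ := hS.lift _ hδ with hu_def
  have hu : u ≫ S.f = P.d (n-1) n ≫ g₁ := hS.lift_f _ hδ
  have hu0 : P.d (n-1-1) (n-1) ≫ u = 0 := by
    rw [← cancel_mono S.f, Category.assoc, hu, zero_comp]
    simp
  obtain ⟨v, hv⟩ := hS1 (n-1) u hu0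
  set v' : P.X n ⟶ S.X₁ := (P.XIsoOfEq (show n = n-1+1 by omega)).hom ≫ v with hv'_def
  have hv' : P.d (n-1) n ≫ v' = u := by
    rw [hv'_def, ← Category.assoc, d_comp_XIsoOfEq_hom, ← hv]
  have hg₂ : P.d (n-1) n ≫ (g₁ - v' ≫ S.f) = 0 := by
    rw [Preadditive.comp_sub, ← hu, ← Category.assoc, hv', sub_self]
  obtain ⟨h₂, hh₂⟩ := hS2 n (g₁ - v' ≫ S.f) hg₂
  refine ⟨h₂ ≫ S.g, ?_⟩
  rw [← Category.assoc, ← hh₂, Preadditive.sub_comp, hg₁, Category.assoc, S.zero,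
    comp_zero, sub_zero]

lemma lifts_of_resolution [EnoughProjectives 𝒜]
    (hproj : ∀ n : ℤ, Projective (P.X n))
    (hlift : ∀ Q : 𝒜, Projective Q → Lifts P Q)
    (M : 𝒜) (R : ProjectiveResolution M) (d : ℕ)
    (hW : Projective (image (R.complex.d (d+1) d))) : Lifts P M := by
  have hSC : ∀ k : ℕ, (ShortComplex.mk (image.ι (R.complex.d (k+2) (k+1)))
      (factorThruImage (R.complex.d (k+1) k))
      (imageι_comp_factorThruImage_eq_zero (R.complex.d_comp_d _ _ _))).Exact := by
    intro k
    exact exact_mk_imageι (exact_mk_f_factor (R.exact_succ k))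
  have key : ∀ j : ℕ, Lifts P (image (R.complex.d (d - j + 1) (d - j))) := by
    intro j
    induction j with
    | zero => exact hlift _ hW
    | succ j ih =>
      by_cases hj : j < d
      · have e1 : d - (j+1) + 2 = d - j + 1 := by omega
        have e2 : d - (j+1) + 1 = d - j := by omega
        have ih' : Lifts P (image (R.complex.d (d-(j+1)+2) (d-(j+1)+1))) := by
          rw [e1, e2]; exact ih
        exact lifts_step P hproj (hSC (d-(j+1))) inferInstance inferInstance ih'
          (hlift _ (R.projective _))
      · have e : d - (j+1) = d - j := by omega
        rw [e]; exact ih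
  have W0 : Lifts P (image (R.complex.d 1 0)) := by
    have := key d
    rw [show d - d = 0 from by omega] at this
    exact this
  have w0 : image.ι (R.complex.d 1 0) ≫ R.π.f 0 = 0 := by
    rw [← cancel_epi (factorThruImage (R.complex.d 1 0)), image.fac_assoc, comp_zero]
    exact R.complex_d_comp_π_f_zero
  exact lifts_step P hproj
    (exact_mk_imageι (S := ShortComplex.mk _ _ R.complex_d_comp_π_f_zero) R.exact₀)
    inferInstance inferInstance W0 (hlift _ (R.projective 0))

lemma projective_syzygy [EnoughProjectives 𝒜] [Linear ℤ 𝒜] (M : 𝒜) (R : ProjectiveResolution M)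
    (d : ℕ)
    (hext : IsZero (((Ext ℤ 𝒜 (d+1)).obj (Opposite.op M)).obj (image (R.complex.d (d+1) d)))) :
    Projective (image (R.complex.d (d+1) d)) := by
  set Ω := image (R.complex.d (d+1) d) with hΩ
  have hz : IsZero ((R.complex.linearYonedaObj ℤ Ω).homology (d+1)) :=
    hext.of_iso (R.isoExt (d+1) Ω).symm
  have hex : (R.complex.linearYonedaObj ℤ Ω).ExactAt (d+1) :=
    (HomologicalComplex.exactAt_iff_isZero_homology _ _).2 hz
  rw [HomologicalComplex.exactAt_iff' _ d (d+1) (d+2) (by simp) (by simp),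
    ShortComplex.moduleCat_exact_iff] at hex
  obtain ⟨x₁, hx₁⟩ := hex (factorThruImage (R.complex.d (d+1) d)) (by
    show ((R.complex.linearYonedaObj ℤ Ω).d (d+1) (d+2)) _ = 0
    rw [ChainComplex.linearYonedaObj_d]
    show R.complex.d (d+2) (d+1) ≫ factorThruImage (R.complex.d (d+1) d) = 0
    rw [← cancel_mono (image.ι _), Category.assoc, image.fac, zero_comp]
    simp)
  change R.complex.X d ⟶ Ω at x₁
  have hx₁' : R.complex.d (d+1) d ≫ x₁ = factorThruImage (R.complex.d (d+1) d) := by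
    have : ((R.complex.linearYonedaObj ℤ Ω).d d (d+1)) x₁ =
        factorThruImage (R.complex.d (d+1) d) := hx₁
    rwa [ChainComplex.linearYonedaObj_d] at this
  have hretract : image.ι (R.complex.d (d+1) d) ≫ x₁ = 𝟙 Ω := by
    rw [← cancel_epi (factorThruImage (R.complex.d (d+1) d)), image.fac_assoc, hx₁']; exact (Category.comp_id _).symm
  haveI := R.projective d
  refine ⟨fun {E X} f e he => ?_⟩
  refine ⟨image.ι (R.complex.d (d+1) d) ≫ Projective.factorThru (x₁ ≫ f) e, ?_⟩
  rw [Category.assoc, Projective.factorThru_comp, ← Category.assoc, hretract, Category.id_comp]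

variable {𝒜' : Type u₂} [Category.{v₂} 𝒜'] [Abelian 𝒜']

lemma lifts_map (l : 𝒜 ⥤ 𝒜') (e : 𝒜' ⥤ 𝒜) [l.Additive] [e.Additive] (adj : l ⊣ e)
    (Q : 𝒜') (h : Lifts P (e.obj Q)) :
    Lifts ((l.mapHomologicalComplex (ComplexShape.up ℤ)).obj P) Q := by
  intro n g hg
  set g' := adj.homEquiv _ _ g with hg'def
  have hg0 : l.map (P.d (n-1) n) ≫ g = 0 := hg
  have hg' : P.d (n-1) n ≫ g' = 0 := by
    calc P.d (n-1) n ≫ g' = adj.homEquiv _ _ (l.map (P.d (n-1) n) ≫ g) :=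
          (adj.homEquiv_naturality_left _ _).symm
    _ = adj.homEquiv _ _ 0 := by rw [hg0]
    _ = 0 := by simp [Adjunction.homEquiv_apply, Functor.map_zero]
  obtain ⟨h', hh'⟩ := h n g' hg'
  refine ⟨(adj.homEquiv _ _).symm h', ?_⟩
  show g = l.map (P.d n (n+1)) ≫ (adj.homEquiv _ _).symm h'
  rw [← Adjunction.homEquiv_naturality_left_symm, ← hh', hg'def]
  exact ((adj.homEquiv _ _).symm_apply_apply g).symm

/-- The "stupid" truncation of `P` below degree `n`, reindexed as a `ℕ`-indexed
chain complex: `... ⟶ P.X (n-3) ⟶ P.X (n-2) ⟶ P.X (n-1)`. -/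
noncomputable def truncC (n : ℤ) : ChainComplex 𝒜 ℕ :=
  ChainComplex.of (fun i => P.X (n - 1 - (i : ℤ)))
    (fun i => P.d (n - 1 - ((i+1 : ℕ) : ℤ)) (n - 1 - (i : ℤ)))
    (fun _ => P.d_comp_d _ _ _)

/-- The short complexes of `truncC` agree with those of `P`. -/
noncomputable def truncScIso (n : ℤ) (j : ℕ) :
    P.sc' (n-1-((j+1+1:ℕ):ℤ)) (n-1-((j+1:ℕ):ℤ)) (n-1-((j:ℕ):ℤ)) ≅
      (truncC P n).sc' (j+1+1) (j+1) j :=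
  ShortComplex.isoMk (Iso.refl _) (Iso.refl _) (Iso.refl _)
    (by simp [truncC, HomologicalComplex.sc', HomologicalComplex.shortComplexFunctor',
      ChainComplex.of_d])
    (by simp [truncC, HomologicalComplex.sc', HomologicalComplex.shortComplexFunctor',
      ChainComplex.of_d])

lemma truncC_exactAt (hPex : ∀ m : ℤ, P.ExactAt m) (n : ℤ) (j : ℕ) :
    (truncC P n).ExactAt (j+1) := by
  rw [HomologicalComplex.exactAt_iff' _ (j+1+1) (j+1) j (by simp) (by simp)]
  have h := hPex (n - 1 - ((j+1:ℕ):ℤ))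
  rw [HomologicalComplex.exactAt_iff' _ (n-1-((j+1+1:ℕ):ℤ)) (n-1-((j+1:ℕ):ℤ)) (n-1-((j:ℕ):ℤ))
    (by rw [CochainComplex.prev]; push_cast; ring)
    (by rw [CochainComplex.next]; push_cast; ring)] at h
  exact (ShortComplex.exact_iff_of_iso (truncScIso P n j)).1 h

/-- `truncC P n` is a projective resolution of the `n`-th cosyzygy `image (P.d (n-1) n)`. -/
noncomputable def truncRes (hPex : ∀ m : ℤ, P.ExactAt m)
    (hproj : ∀ m : ℤ, Projective (P.X m)) (n : ℤ) :
    ProjectiveResolution (image (P.d (n-1) n)) where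
  complex := truncC P n
  projective _ := hproj _
  π := (ChainComplex.toSingle₀Equiv _ _).symm
    ⟨(P.XIsoOfEq (show n - 1 - ((0:ℕ):ℤ) = n - 1 by simp)).hom ≫ factorThruImage (P.d (n-1) n), by
      rw [show (truncC P n).d 1 0 = P.d (n-1-((0+1:ℕ):ℤ)) (n-1-((0:ℕ):ℤ)) from by
        unfold truncC; simp [ChainComplex.of.d]]
      erw [← Category.assoc, d_comp_XIsoOfEq_hom]
      erw [← cancel_mono (image.ι _), Category.assoc, image.fac, zero_comp]
      exact P.d_comp_d _ _ _⟩
  quasiIso := ⟨fun i => by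
    cases i with
    | zero =>
      rw [ChainComplex.quasiIsoAt₀_iff, ShortComplex.quasiIso_iff_of_zeros']
      rotate_left
      · rfl
      · rfl
      · rfl
      constructor
      · have h := hPex (n-1)
        rw [HomologicalComplex.exactAt_iff' _ (n-1-((1:ℕ):ℤ)) (n-1) n
          (by rw [CochainComplex.prev]; push_cast; ring)
          (by rw [CochainComplex.next]; ring)] at h
        have h2 := exact_mk_f_factor h
        refine (ShortComplex.exact_iff_of_iso ?_).1 h2
        refine ShortComplex.isoMk (Iso.refl _)
          (P.XIsoOfEq (show (n:ℤ) - 1 = n - 1 - ((0:ℕ):ℤ) by simp)) (Iso.refl _) ?_ ?_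
        · dsimp
          exact (Category.id_comp _).trans ((show (truncC P n).d 1 0 = P.d (n-1-((0+1:ℕ):ℤ)) (n-1-((0:ℕ):ℤ)) from by
            unfold truncC; simp [ChainComplex.of.d]).trans (d_comp_XIsoOfEq_hom P _).symm)
        · simp [ChainComplex.toSingle₀Equiv, HomologicalComplex.XIsoOfEq]
          erw [eqToHom_trans_assoc, eqToHom_refl, Category.id_comp, Category.comp_id]
          rfl
      · dsimp
        change Epi ((((truncC P n).toSingle₀Equiv (image (P.d (n - 1) n))).symm _).f 0)
        rw [ChainComplex.toSingle₀Equiv_symm_apply_f_zero]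
        have : Epi (factorThruImage (P.d (n - 1) n)) := inferInstance
        have h1 : Epi (P.XIsoOfEq (show n - 1 - ((0:ℕ):ℤ) = n - 1 by simp)).hom := inferInstance
        exact @epi_comp _ _ _ _ _ _ h1 _ this
    | succ j =>
      rw [quasiIsoAt_iff_exactAt']
      · exact truncC_exactAt P hPex n j
      · apply ChainComplex.exactAt_succ_single_obj⟩

variable (l : 𝒜 ⥤ 𝒜') [l.Additive]

/-- Short complexes of the mapped truncation agree with those of the mapped complex. -/
noncomputable def mappedTruncScIso (n : ℤ) (j : ℕ) :
    ((l.mapHomologicalComplex (ComplexShape.up ℤ)).obj P).sc'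
        (n-1-((j+1+1:ℕ):ℤ)) (n-1-((j+1:ℕ):ℤ)) (n-1-((j:ℕ):ℤ)) ≅
      ((l.mapHomologicalComplex (ComplexShape.down ℕ)).obj (truncC P n)).sc' (j+1+1) (j+1) j :=
  ShortComplex.isoMk (Iso.refl _) (Iso.refl _) (Iso.refl _)
    (by simp [truncC, HomologicalComplex.sc', HomologicalComplex.shortComplexFunctor',
      ChainComplex.of_d]; exact (Category.id_comp _).trans (Category.comp_id _).symm)
    (by simp [truncC, HomologicalComplex.sc', HomologicalComplex.shortComplexFunctor',
      ChainComplex.of_d]; exact (Category.id_comp _).trans (Category.comp_id _).symm)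

lemma mapped_exactAt_of_trunc (n : ℤ) (j : ℕ)
    (h : ((l.mapHomologicalComplex (ComplexShape.down ℕ)).obj (truncC P n)).ExactAt (j+1)) :
    ((l.mapHomologicalComplex (ComplexShape.up ℤ)).obj P).ExactAt (n-1-((j+1:ℕ):ℤ)) := by
  rw [HomologicalComplex.exactAt_iff' _ (j+1+1) (j+1) j (by simp) (by simp)] at h
  rw [HomologicalComplex.exactAt_iff' _ (n-1-((j+1+1:ℕ):ℤ)) (n-1-((j+1:ℕ):ℤ)) (n-1-((j:ℕ):ℤ))
    (by rw [CochainComplex.prev]; push_cast; ring)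
    (by rw [CochainComplex.next]; push_cast; ring)]
  exact (ShortComplex.exact_iff_of_iso (mappedTruncScIso P l n j)).2 h

lemma trunc_exactAt_of_mapped (n : ℤ) (j : ℕ)
    (h : ((l.mapHomologicalComplex (ComplexShape.up ℤ)).obj P).ExactAt (n-1-((j+1:ℕ):ℤ))) :
    ((l.mapHomologicalComplex (ComplexShape.down ℕ)).obj (truncC P n)).ExactAt (j+1) := by
  rw [HomologicalComplex.exactAt_iff' _ (n-1-((j+1+1:ℕ):ℤ)) (n-1-((j+1:ℕ):ℤ)) (n-1-((j:ℕ):ℤ))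
    (by rw [CochainComplex.prev]; push_cast; ring)
    (by rw [CochainComplex.next]; push_cast; ring)] at h
  rw [HomologicalComplex.exactAt_iff' _ (j+1+1) (j+1) j (by simp) (by simp)]
  exact (ShortComplex.exact_iff_of_iso (mappedTruncScIso P l n j)).1 h


end GorensteinAux

open GorensteinAux

/-- Let `A` and `B` be abelian categories with enough projectives and let
`(l, e) : B ⇄ A` be an adjoint pair with `e : A ⥤ B` exact. Assume (i) `Lᵢ l = 0` for all
sufficiently large `i`, and (ii) there is `d` such that `pd_B(e(P)) ≤ d` for all projective
objects `P` of `A`. Then for every Gorenstein projective object `X` of `B`, `l(X)` is a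
Gorenstein projective object of `A` and `Lᵢ l (X) = 0` for all `i ≥ 1`. -/
theorem l_obj_gorensteinProjective
    (B : Type u₁) (A : Type u₂) [Category.{v₁} B] [Category.{v₂} A]
    [Abelian B] [Abelian A] [EnoughProjectives B] [EnoughProjectives A]
    (l : B ⥤ A) (e : A ⥤ B) [l.Additive] [e.Additive]
    [PreservesFiniteLimits e] [PreservesFiniteColimits e]
    (adj : l ⊣ e)
    -- (i) the left derived functors of `l` vanish in all sufficiently large degrees
    (h1 : ∃ N : ℕ, ∀ (i : ℕ), N ≤ i → ∀ Y : B, IsZero ((l.leftDerived i).obj Y))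
    -- (ii) there is a uniform bound `d` on the projective dimension of `e(P)` for `P`
    -- projective, expressed through the vanishing of `Ext^i(e(P), -)` for `i > d`
    (h2 : ∃ d : ℕ, ∀ P : A, Projective P → ∀ (i : ℕ), d < i → ∀ Y : B,
      IsZero (((Ext ℤ B i).obj (Opposite.op (e.obj P))).obj Y)) :
    ∀ X : B, IsGorensteinProjective X →
      IsGorensteinProjective (l.obj X) ∧
        ∀ (i : ℕ), 1 ≤ i → IsZero ((l.leftDerived i).obj X) := by
  obtain ⟨N, hN⟩ := h1
  obtain ⟨d, hd⟩ := h2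
  intro X hX
  obtain ⟨P, hproj, hPex, hP3, ⟨iso0⟩⟩ := hX
  haveI : PreservesColimitsOfSize.{0,0} l := adj.leftAdjoint_preservesColimits
  haveI : PreservesFiniteColimits l := Limits.PreservesColimitsOfSize.preservesFiniteColimits l
  -- the mapped complex is acyclic
  have hmex : ∀ m : ℤ, ((l.mapHomologicalComplex (ComplexShape.up ℤ)).obj P).ExactAt m := by
    intro m
    set n : ℤ := m + ((N+1:ℕ):ℤ) + 1 with hn
    have hz2 : IsZero
        ((((l.mapHomologicalComplex (ComplexShape.down ℕ)).obj (truncC P n))).homology (N+1)) :=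
      (hN (N+1) (by omega) (image (P.d (n-1) n))).of_iso
        (((truncRes P hPex hproj n).isoLeftDerivedObj l (N+1)).symm)
    have hD : ((l.mapHomologicalComplex (ComplexShape.down ℕ)).obj (truncC P n)).ExactAt (N+1) :=
      (HomologicalComplex.exactAt_iff_isZero_homology _ _).2 hz2
    have hEx := mapped_exactAt_of_trunc P l n N hD
    have hmn : n - 1 - ((N+1:ℕ):ℤ) = m := by push_cast; omega
    rwa [hmn] at hEx
  constructor
  · refine ⟨(l.mapHomologicalComplex (ComplexShape.up ℤ)).obj P,
      fun n => adj.map_projective _ (hproj n), hmex, ?_, ?_⟩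
    · intro Q hQ
      have hQe : Lifts P (e.obj Q) :=
        lifts_of_resolution P hproj hP3 (e.obj Q) (projectiveResolution (e.obj Q)) d
          (projective_syzygy (e.obj Q) (projectiveResolution (e.obj Q)) d
            (hd Q hQ (d+1) (by omega) _))
      exact lifts_map P l e adj Q hQe
    · -- l.obj X ≅ image (lP.d (-1) 0)
      have hexB : (P.sc' (-2) (-1) 0).Exact := by
        have h := hPex (-1)
        rwa [HomologicalComplex.exactAt_iff' _ (-2) (-1) 0
          (by rw [CochainComplex.prev]; norm_num) (by rw [CochainComplex.next]; norm_num)] at h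
      have hexA : (((l.mapHomologicalComplex (ComplexShape.up ℤ)).obj P).sc' (-2) (-1) 0).Exact := by
        have h := hmex (-1)
        rwa [HomologicalComplex.exactAt_iff' _ (-2) (-1) 0
          (by rw [CochainComplex.prev]; norm_num) (by rw [CochainComplex.next]; norm_num)] at h
      refine ⟨?_⟩
      calc l.obj X ≅ l.obj (cokernel (P.d (-2) (-1))) :=
            l.mapIso (iso0 ≪≫ (cokernelIsoImage hexB).symm)
      _ ≅ cokernel (l.map (P.d (-2) (-1))) := PreservesCokernel.iso l _
      _ ≅ image (((l.mapHomologicalComplex (ComplexShape.up ℤ)).obj P).d (-1) 0) :=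
            cokernelIsoImage hexA
  · intro i hi
    obtain ⟨j, rfl⟩ : ∃ j, i = j + 1 := ⟨i - 1, by omega⟩
    have hET := trunc_exactAt_of_mapped P l 0 j (hmex _)
    have hz : IsZero
        ((((l.mapHomologicalComplex (ComplexShape.down ℕ)).obj (truncC P 0))).homology (j+1)) :=
      (HomologicalComplex.exactAt_iff_isZero_homology _ _).1 hET
    have imgIso : image (P.d (-1) 0) ≅ image (P.d (0-1) 0) :=
      eqToIso (by rw [show (0:ℤ) - 1 = -1 from by norm_num])
    exact hz.of_iso ((l.leftDerived (j+1)).mapIso (iso0 ≪≫ imgIso) ≪≫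
      (truncRes P hPex hproj 0).isoLeftDerivedObj l (j+1))
end
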